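/- arXiv:2007.09866 — 3 statements merged into one kernel-verified Lean document; each statement's English description precedes it below -/
import Mathlib

section
/- Let α > 2, let ℓ ∈ [0,1] be the NLoS attenuation factor, let ρ : [0, π/2] → [0, 1] be a measurable LoS-probability function, and let W and Θ be independent random variables with W ≥ 0, E[W^{2/α}] < ∞, and Θ taking values in [0, π/2]. Then for every r > 0, ∫₀^∞ E[ ρ(Θ)·1{W·cos^α(Θ) ≥ r·z^{α/2}} + (1 − ρ(Θ))·1{ℓ·W·cos^α(Θ) ≥ r·z^{α/2}} ] dz = r^{−2/α}·E[W^{2/α}]·ω, where ω := E[cos²(Θ)·(ρ(Θ)·(1 − ℓ^{2/α}) + ℓ^{2/α})]. -/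
open MeasureTheory Set Real


lemma key_iff {α r c : ℝ} (hα : 2 < α) (hr : 0 < r) (hc : 0 ≤ c) {z : ℝ} (hz : 0 < z) :
    r * z ^ (α / 2) ≤ c ↔ z ≤ (c / r) ^ (2 / α) := by
  have hα0 : (0:ℝ) < α := by linarith
  have hmul : α / 2 * (2 / α) = 1 := by field_simp
  rw [mul_comm, ← le_div_iff₀ hr]
  constructor
  · intro h
    have h2 := Real.rpow_le_rpow (Real.rpow_nonneg hz.le _) h (by positivity : (0:ℝ) ≤ 2/α)
    rwa [← Real.rpow_mul hz.le, hmul, Real.rpow_one] at h2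
  · intro h
    have h2 := Real.rpow_le_rpow hz.le h (by positivity : (0:ℝ) ≤ α/2)
    rwa [← Real.rpow_mul (by positivity), mul_comm (2/α), hmul, Real.rpow_one] at h2

lemma key_eqon {α r c : ℝ} (hα : 2 < α) (hr : 0 < r) (hc : 0 ≤ c) :
    EqOn (fun z : ℝ => if r * z ^ (α / 2) ≤ c then (1:ℝ) else 0)
      ((Ioc (0:ℝ) ((c / r) ^ (2 / α))).indicator (fun _ => (1:ℝ))) (Ioi 0) := by
  intro z hz
  have hi := key_iff hα hr hc (mem_Ioi.1 hz)
  simp only [indicator, mem_Ioc]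
  by_cases h : z ≤ (c / r) ^ (2 / α) <;> simp [h, hi, mem_Ioi.1 hz]

lemma key_integrable {α r c : ℝ} (hα : 2 < α) (hr : 0 < r) (hc : 0 ≤ c) :
    IntegrableOn (fun z : ℝ => if r * z ^ (α / 2) ≤ c then (1:ℝ) else 0) (Ioi 0) := by
  apply IntegrableOn.congr_fun _ (key_eqon hα hr hc).symm measurableSet_Ioi
  exact (((integrable_indicator_iff measurableSet_Ioc).2
    (integrableOn_const measure_Ioc_lt_top.ne)).integrableOn)

lemma key_integral {α r c : ℝ} (hα : 2 < α) (hr : 0 < r) (hc : 0 ≤ c) :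
    ∫ z in Ioi (0:ℝ), (if r * z ^ (α / 2) ≤ c then (1:ℝ) else 0) = (c / r) ^ (2 / α) := by
  rw [setIntegral_congr_fun measurableSet_Ioi (key_eqon hα hr hc),
    setIntegral_indicator measurableSet_Ioc]
  have ht : 0 ≤ (c / r) ^ (2 / α) := Real.rpow_nonneg (div_nonneg hc hr.le) _
  rw [show Ioi (0:ℝ) ∩ Ioc 0 ((c / r) ^ (2 / α)) = Ioc 0 ((c / r) ^ (2 / α)) by
      rw [inter_eq_right]; exact Ioc_subset_Ioi_self]
  simp [Real.volume_Ioc, ENNReal.toReal_ofReal ht, ht]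

lemma inner_calc {α ℓ r p w t : ℝ} (hα : 2 < α) (hr : 0 < r) (hℓ0 : 0 ≤ ℓ)
    (hw : 0 ≤ w) (ht : 0 ≤ t) :
    ∫ z in Ioi (0:ℝ), (p * (if r * z ^ (α / 2) ≤ w * t ^ α then (1:ℝ) else 0)
      + (1 - p) * (if r * z ^ (α / 2) ≤ ℓ * w * t ^ α then (1:ℝ) else 0))
    = r ^ (-(2 / α)) * (w ^ (2 / α) * (t ^ 2 * (p * (1 - ℓ ^ (2 / α)) + ℓ ^ (2 / α)))) := by
  have hα0 : (0:ℝ) < α := by linarith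
  have hc1 : (0:ℝ) ≤ w * t ^ α := by positivity
  have hc2 : (0:ℝ) ≤ ℓ * w * t ^ α := by positivity
  rw [integral_add ((key_integrable hα hr hc1).const_mul p)
      ((key_integrable hα hr hc2).const_mul (1 - p)),
    integral_const_mul, integral_const_mul, key_integral hα hr hc1, key_integral hα hr hc2]
  have htα : (t ^ α) ^ (2 / α) = t ^ 2 := by
    rw [← Real.rpow_mul ht, mul_div_cancel₀ _ (ne_of_gt hα0)]
    norm_num [Real.rpow_natCast]
  have h1 : (w * t ^ α / r) ^ (2 / α) = w ^ (2 / α) * t ^ 2 * r ^ (-(2 / α)) := by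
    rw [Real.div_rpow hc1 hr.le, Real.mul_rpow hw (by positivity), htα,
      Real.rpow_neg hr.le, div_eq_mul_inv]
  have h2 : (ℓ * w * t ^ α / r) ^ (2 / α)
      = ℓ ^ (2 / α) * (w ^ (2 / α) * t ^ 2) * r ^ (-(2 / α)) := by
    rw [Real.div_rpow hc2 hr.le, Real.mul_rpow (by positivity) (by positivity),
      Real.mul_rpow hℓ0 hw, htα, Real.rpow_neg hr.le, div_eq_mul_inv]
    ring
  rw [h1, h2]; ring


/-- Theorem 1(i) exponent (APIL scenario): for `α > 2`, NLoS factor `ℓ ∈ [0,1]`,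
a measurable LoS-probability function `ρ : [0,π/2] → [0,1]`, and independent
random variables `W ≥ 0` (with `E[W^{2/α}] < ∞`) and `Θ ∈ [0,π/2]`, for every `r > 0`,
`∫₀^∞ E[ρ(Θ)·1{W cos^α Θ ≥ r z^{α/2}} + (1-ρ(Θ))·1{ℓ W cos^α Θ ≥ r z^{α/2}}] dz
  = r^{-2/α} E[W^{2/α}] ω`, with `ω = E[cos² Θ (ρ(Θ)(1-ℓ^{2/α}) + ℓ^{2/α})]`. -/
theorem apil_cdf_exponent
    {Ω : Type*} [MeasurableSpace Ω] (μ : Measure Ω) [IsProbabilityMeasure μ]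
    (α ℓ : ℝ) (hα : 2 < α) (hℓ0 : 0 ≤ ℓ) (hℓ1 : ℓ ≤ 1)
    (ρ : ℝ → ℝ) (hρ : Measurable ρ) (hρ01 : ∀ θ ∈ Icc (0 : ℝ) (π / 2), ρ θ ∈ Icc (0 : ℝ) 1)
    (W Θ : Ω → ℝ) (hW : Measurable W) (hΘ : Measurable Θ)
    (hindep : ProbabilityTheory.IndepFun W Θ μ)
    (hW0 : ∀ ω, 0 ≤ W ω) (hΘrange : ∀ ω, Θ ω ∈ Icc (0 : ℝ) (π / 2))
    (hWint : Integrable (fun ω => W ω ^ (2 / α)) μ) :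
    ∀ r : ℝ, 0 < r →
      ∫ z in Ioi (0 : ℝ),
          (∫ ω, (ρ (Θ ω) * (if r * z ^ (α / 2) ≤ W ω * Real.cos (Θ ω) ^ α then 1 else 0)
            + (1 - ρ (Θ ω)) *
                (if r * z ^ (α / 2) ≤ ℓ * W ω * Real.cos (Θ ω) ^ α then 1 else 0)) ∂μ)
        = r ^ (-(2 / α)) * (∫ ω, W ω ^ (2 / α) ∂μ) *
            ∫ ω, Real.cos (Θ ω) ^ 2 * (ρ (Θ ω) * (1 - ℓ ^ (2 / α)) + ℓ ^ (2 / α)) ∂μ := by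
  intro r hr
  have hα0 : (0:ℝ) < α := by linarith
  set ν : Measure ℝ := volume.restrict (Ioi 0) with hν
  set F : ℝ → Ω → ℝ := fun z ω =>
    ρ (Θ ω) * (if r * z ^ (α / 2) ≤ W ω * Real.cos (Θ ω) ^ α then (1:ℝ) else 0)
    + (1 - ρ (Θ ω)) *
        (if r * z ^ (α / 2) ≤ ℓ * W ω * Real.cos (Θ ω) ^ α then (1:ℝ) else 0) with hF
  set h : ℝ → ℝ := fun θ => Real.cos θ ^ 2 * (ρ θ * (1 - ℓ ^ (2 / α)) + ℓ ^ (2 / α)) with hh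
  have hhmeas : Measurable h := by
    apply ((Real.measurable_cos.pow_const 2).mul ((hρ.mul_const _).add_const _))
  have hcos : ∀ ω : Ω, 0 ≤ Real.cos (Θ ω) := fun ω =>
    Real.cos_nonneg_of_mem_Icc
      ⟨by linarith [(hΘrange ω).1, Real.pi_pos.le], (hΘrange ω).2⟩
  have hρθ : ∀ ω : Ω, ρ (Θ ω) ∈ Icc (0:ℝ) 1 := fun ω => hρ01 _ (hΘrange ω)
  have hc1 : ∀ ω : Ω, (0:ℝ) ≤ W ω * Real.cos (Θ ω) ^ α := fun ω =>
    mul_nonneg (hW0 ω) (Real.rpow_nonneg (hcos ω) _)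
  have hc2 : ∀ ω : Ω, (0:ℝ) ≤ ℓ * W ω * Real.cos (Θ ω) ^ α := fun ω =>
    mul_nonneg (mul_nonneg hℓ0 (hW0 ω)) (Real.rpow_nonneg (hcos ω) _)
  -- measurability of the uncurried integrand
  have hmF : Measurable (Function.uncurry F) := by
    have hz : Measurable fun q : ℝ × Ω => r * q.1 ^ (α / 2) := by fun_prop
    have hm1 : Measurable fun q : ℝ × Ω => W q.2 * Real.cos (Θ q.2) ^ α := by fun_prop
    have hm2 : Measurable fun q : ℝ × Ω => ℓ * W q.2 * Real.cos (Θ q.2) ^ α := by fun_prop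
    exact (((hρ.comp (hΘ.comp measurable_snd)).mul
        (Measurable.ite (measurableSet_le hz hm1) measurable_const measurable_const)).add
      (((measurable_const.sub (hρ.comp (hΘ.comp measurable_snd)))).mul
        (Measurable.ite (measurableSet_le hz hm2) measurable_const measurable_const)))
  have hint_z : ∀ ω : Ω, Integrable (fun z => F z ω) ν := fun ω =>
    ((key_integrable hα hr (hc1 ω)).const_mul _).add
      ((key_integrable hα hr (hc2 ω)).const_mul _)
  have hinner : ∀ ω : Ω, ∫ z, F z ω ∂ν = r ^ (-(2 / α)) * (W ω ^ (2 / α) * h (Θ ω)) :=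
    fun ω => inner_calc hα hr hℓ0 (hW0 ω) (hcos ω)
  have hFnn : ∀ z (ω : Ω), 0 ≤ F z ω := by
    intro z ω
    have h1 := (hρθ ω).1
    have h2 := (hρθ ω).2
    apply add_nonneg <;> apply mul_nonneg <;> first
      | linarith
      | split <;> norm_num
  -- bound on h
  have hℓα : ℓ ^ (2 / α) ∈ Icc (0:ℝ) 1 :=
    ⟨Real.rpow_nonneg hℓ0 _, Real.rpow_le_one hℓ0 hℓ1 (by positivity)⟩
  have hhbdd : ∀ ω : Ω, ‖h (Θ ω)‖ ≤ 1 := by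
    intro ω
    have h1 := (hρθ ω).1; have h2 := (hρθ ω).2
    have h3 := hℓα.1; have h4 := hℓα.2
    have h5 := hcos ω
    have h6 : Real.cos (Θ ω) ≤ 1 := Real.cos_le_one _
    have hq0 : 0 ≤ ρ (Θ ω) * (1 - ℓ ^ (2 / α)) + ℓ ^ (2 / α) := by nlinarith
    have hq1 : ρ (Θ ω) * (1 - ℓ ^ (2 / α)) + ℓ ^ (2 / α) ≤ 1 := by nlinarith
    have hcsq0 : (0:ℝ) ≤ Real.cos (Θ ω) ^ 2 := sq_nonneg _
    have hcsq1 : Real.cos (Θ ω) ^ 2 ≤ 1 := by nlinarith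
    simp only [hh, Real.norm_eq_abs]
    rw [abs_of_nonneg (mul_nonneg hcsq0 hq0)]
    nlinarith
  have hGint : Integrable (fun ω => W ω ^ (2 / α) * h (Θ ω)) μ := by
    have := hWint.bdd_mul ((hhmeas.comp hΘ).aestronglyMeasurable) (ae_of_all _ hhbdd)
    simpa [mul_comm] using this
  -- Fubini
  have hprod : Integrable (Function.uncurry F) (ν.prod μ) := by
    refine (integrable_prod_iff' hmF.aestronglyMeasurable).2 ⟨ae_of_all _ hint_z, ?_⟩
    apply (hGint.const_mul (r ^ (-(2 / α)))).congr
    refine ae_of_all _ fun ω => ?_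
    show r ^ (-(2 / α)) * (W ω ^ (2 / α) * h (Θ ω)) = ∫ z, ‖F z ω‖ ∂ν
    rw [← hinner ω]
    exact integral_congr_ae (ae_of_all _ fun z => (Real.norm_of_nonneg (hFnn z ω)).symm)
  have hswap : ∫ z, (∫ ω, F z ω ∂μ) ∂ν = ∫ ω, (∫ z, F z ω ∂ν) ∂μ :=
    integral_integral_swap hprod
  -- independence
  have hind2 : ProbabilityTheory.IndepFun (fun ω => W ω ^ (2 / α)) (fun ω => h (Θ ω)) μ :=
    hindep.comp (by fun_prop : Measurable fun x : ℝ => x ^ (2 / α)) hhmeas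
  have hmul : ∫ ω, W ω ^ (2 / α) * h (Θ ω) ∂μ
      = (∫ ω, W ω ^ (2 / α) ∂μ) * ∫ ω, h (Θ ω) ∂μ :=
    hind2.integral_fun_mul_eq_mul_integral
      ((by fun_prop : Measurable fun ω => W ω ^ (2 / α)).aestronglyMeasurable)
      ((hhmeas.comp hΘ).aestronglyMeasurable)
  calc ∫ z, (∫ ω, F z ω ∂μ) ∂ν = ∫ ω, (∫ z, F z ω ∂ν) ∂μ := hswap
    _ = ∫ ω, r ^ (-(2 / α)) * (W ω ^ (2 / α) * h (Θ ω)) ∂μ :=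
        integral_congr_ae (ae_of_all _ hinner)
    _ = r ^ (-(2 / α)) * ∫ ω, W ω ^ (2 / α) * h (Θ ω) ∂μ := integral_const_mul _ _
    _ = r ^ (-(2 / α)) * ((∫ ω, W ω ^ (2 / α) ∂μ) * ∫ ω, h (Θ ω) ∂μ) := by rw [hmul]
    _ = r ^ (-(2 / α)) * (∫ ω, W ω ^ (2 / α) ∂μ) * ∫ ω, h (Θ ω) ∂μ := by ring
end

section
/- Let α > 2, let ℓ ∈ [0,1] be the NLoS attenuation factor, let ρ : [0, π/2] → [0, 1] be a measurable LoS-probability function, and let W and Θ be independent random variables with W ≥ 0, E[W^{2/α}] < ∞, and Θ taking values in [0, π/2]. Then for every s > 0, ∫₀^∞ E[ ρ(Θ)·(1 − exp(−s·W·cos^α(Θ)·z^{−α/2})) + (1 − ρ(Θ))·(1 − exp(−s·ℓ·W·cos^α(Θ)·z^{−α/2})) ] dz = s^{2/α}·Γ(1 − 2/α)·E[W^{2/α}]·ω, where ω := E[cos²(Θ)·(ρ(Θ)·(1 − ℓ^{2/α}) + ℓ^{2/α})]. -/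
open MeasureTheory Set Real Filter Topology

lemma apil_aux_exp_int {α c : ℝ} (hα : 2 < α) (hc : 0 < c) :
    ∫ z in Ioi (0:ℝ), c * (α/2) * z ^ (-(α/2)) * Real.exp (-(c * z ^ (-(α/2))))
      = c ^ (2/α) * Real.Gamma (1 - 2/α) := by
  have hα0 : (0:ℝ) < α := by linarith
  have hq : -(α/2) ≠ 0 := by intro h; nlinarith [neg_eq_zero.mp h]
  have key := MeasureTheory.integral_comp_rpow_Ioi
    (fun y => c * (y ^ ((1 - 2/α) - 1) * Real.exp (-(c * y)))) hq
  have h1 : ∀ z ∈ Ioi (0:ℝ),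
      (|(-(α/2))| * z ^ (-(α/2) - 1)) •
        (c * ((z ^ (-(α/2))) ^ ((1 - 2/α) - 1) * Real.exp (-(c * z ^ (-(α/2))))))
      = c * (α/2) * z ^ (-(α/2)) * Real.exp (-(c * z ^ (-(α/2)))) := by
    intro z hz
    have hz0 : (0:ℝ) < z := hz
    have e1 : (z ^ (-(α/2))) ^ ((1 - 2/α) - 1) = z := by
      rw [← Real.rpow_mul hz0.le]
      have : -(α/2) * ((1 - 2/α) - 1) = 1 := by field_simp; ring
      rw [this, Real.rpow_one]
    have e2 : z ^ (-(α/2) - 1) * z = z ^ (-(α/2)) := by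
      nth_rewrite 2 [← Real.rpow_one z]
      rw [← Real.rpow_add hz0]; ring_nf
    rw [e1, abs_of_nonpos (by linarith : -(α/2) ≤ 0), smul_eq_mul, neg_neg]
    linear_combination (c * (α/2) * Real.exp (-(c * z ^ (-(α/2))))) * e2
  rw [setIntegral_congr_fun measurableSet_Ioi h1] at key
  rw [key]
  have ha1 : (0:ℝ) < 1 - 2/α := by
    have : 2/α < 1 := (div_lt_one hα0).mpr hα
    linarith
  show ∫ y in Ioi (0:ℝ), c * (y ^ ((1 - 2/α) - 1) * Real.exp (-(c * y))) = _
  rw [MeasureTheory.integral_const_mul, Real.integral_rpow_mul_exp_neg_mul_Ioi ha1 hc]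
  rw [one_div, Real.inv_rpow hc.le]
  have h3 : c ^ (2/α) * c ^ (1 - 2/α) = c := by
    rw [← Real.rpow_add hc]; ring_nf; exact Real.rpow_one c
  have h4 : (0:ℝ) < c ^ (1 - 2/α) := Real.rpow_pos_of_pos hc _
  have h5 : c * (c ^ (1 - 2/α))⁻¹ = c ^ (2/α) := by
    rw [inv_eq_one_div, mul_one_div, div_eq_iff h4.ne']
    exact h3.symm
  rw [← mul_assoc, h5]

lemma apil_one_sub_exp_le {u : ℝ} (hu : 0 ≤ u) : 1 - Real.exp (-u) ≤ u := by
  have := Real.add_one_le_exp (-u); linarith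

lemma apil_one_sub_exp_nonneg {u : ℝ} (hu : 0 ≤ u) : 0 ≤ 1 - Real.exp (-u) := by
  have : Real.exp (-u) ≤ 1 := Real.exp_le_one_iff.mpr (by linarith)
  linarith

lemma apil_intOn_one_sub_exp {α c : ℝ} (hα : 2 < α) (hc : 0 ≤ c) :
    IntegrableOn (fun z => 1 - Real.exp (-(c * z ^ (-(α/2))))) (Ioi (0:ℝ)) := by
  have hmeas : Measurable (fun z : ℝ => 1 - Real.exp (-(c * z ^ (-(α/2))))) := by fun_prop
  have : Ioi (0:ℝ) = Ioc 0 1 ∪ Ioi 1 := (Ioc_union_Ioi_eq_Ioi zero_le_one).symm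
  rw [this]
  apply IntegrableOn.union
  · refine Measure.integrableOn_of_bounded (M := 1) (by simp) hmeas.aestronglyMeasurable ?_
    filter_upwards [ae_restrict_mem measurableSet_Ioc] with z hz
    have hu : 0 ≤ c * z ^ (-(α/2)) := mul_nonneg hc (Real.rpow_nonneg hz.1.le _)
    have hexp : Real.exp (-(c * z ^ (-(α/2)))) ≤ 1 := Real.exp_le_one_iff.mpr (by linarith)
    rw [Real.norm_eq_abs, abs_le]
    constructor
    · nlinarith [Real.exp_pos (-(c * z ^ (-(α/2))))]
    · linarith [Real.exp_pos (-(c * z ^ (-(α/2))))]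
  · refine Integrable.mono'
      ((integrableOn_Ioi_rpow_of_lt (by linarith : -(α/2) < -1) one_pos).const_mul c)
      hmeas.aestronglyMeasurable ?_
    filter_upwards [ae_restrict_mem measurableSet_Ioi] with z hz
    have hz0 : (0:ℝ) < z := lt_trans one_pos hz
    have hu : 0 ≤ c * z ^ (-(α/2)) := mul_nonneg hc (Real.rpow_nonneg hz0.le _)
    rw [Real.norm_eq_abs, abs_of_nonneg (apil_one_sub_exp_nonneg hu)]
    exact apil_one_sub_exp_le hu

lemma apil_intOn_exp_part {α c : ℝ} (hα : 2 < α) (hc : 0 ≤ c) :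
    IntegrableOn (fun z => c * (α/2) * z ^ (-(α/2)) * Real.exp (-(c * z ^ (-(α/2)))))
      (Ioi (0:ℝ)) := by
  have hmeas : Measurable
      (fun z : ℝ => c * (α/2) * z ^ (-(α/2)) * Real.exp (-(c * z ^ (-(α/2))))) := by fun_prop
  have : Ioi (0:ℝ) = Ioc 0 1 ∪ Ioi 1 := (Ioc_union_Ioi_eq_Ioi zero_le_one).symm
  rw [this]
  apply IntegrableOn.union
  · refine Measure.integrableOn_of_bounded (M := α/2) (by simp) hmeas.aestronglyMeasurable ?_
    filter_upwards [ae_restrict_mem measurableSet_Ioc] with z hz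
    have hu : 0 ≤ c * z ^ (-(α/2)) := mul_nonneg hc (Real.rpow_nonneg hz.1.le _)
    have hue : c * z ^ (-(α/2)) * Real.exp (-(c * z ^ (-(α/2)))) ≤ 1 := by
      have h1 : c * z ^ (-(α/2)) ≤ Real.exp (c * z ^ (-(α/2))) := by
        have := Real.add_one_le_exp (c * z ^ (-(α/2))); linarith
      have h2 : Real.exp (-(c * z ^ (-(α/2)))) = (Real.exp (c * z ^ (-(α/2))))⁻¹ := by
        rw [Real.exp_neg]
      rw [h2]
      rw [mul_inv_le_iff₀ (Real.exp_pos _), one_mul]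
      exact h1
    have hnn : 0 ≤ c * z ^ (-(α/2)) * Real.exp (-(c * z ^ (-(α/2)))) :=
      mul_nonneg hu (Real.exp_pos _).le
    rw [Real.norm_eq_abs]
    rw [show c * (α/2) * z ^ (-(α/2)) * Real.exp (-(c * z ^ (-(α/2))))
        = (α/2) * (c * z ^ (-(α/2)) * Real.exp (-(c * z ^ (-(α/2))))) from by ring]
    rw [abs_of_nonneg (mul_nonneg (by linarith) hnn)]
    nlinarith
  · refine Integrable.mono'
      ((integrableOn_Ioi_rpow_of_lt (by linarith : -(α/2) < -1) one_pos).const_mul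
        (c * (α/2)))
      hmeas.aestronglyMeasurable ?_
    filter_upwards [ae_restrict_mem measurableSet_Ioi] with z hz
    have hz0 : (0:ℝ) < z := lt_trans one_pos hz
    have hrp : (0:ℝ) ≤ z ^ (-(α/2)) := Real.rpow_nonneg hz0.le _
    have hexp : Real.exp (-(c * z ^ (-(α/2)))) ≤ 1 :=
      Real.exp_le_one_iff.mpr (by nlinarith)
    rw [Real.norm_eq_abs, abs_of_nonneg (by positivity)]
    have hcc : 0 ≤ c * (α/2) * z ^ (-(α/2)) := by positivity
    nlinarith [Real.exp_pos (-(c * z ^ (-(α/2)))), mul_le_of_le_one_right hcc hexp]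

lemma apil_key_integral {α c : ℝ} (hα : 2 < α) (hc : 0 ≤ c) :
    ∫ z in Ioi (0:ℝ), (1 - Real.exp (-(c * z ^ (-(α/2)))))
      = c ^ (2/α) * Real.Gamma (1 - 2/α) := by
  have hα0 : (0:ℝ) < α := by linarith
  have ha0 : (0:ℝ) < 2/α := by positivity
  rcases eq_or_lt_of_le hc with rfl | hc
  · simp [Real.zero_rpow (ne_of_gt ha0)]
  -- FTC part
  set f : ℝ → ℝ := fun z => z * (1 - Real.exp (-(c * z ^ (-(α/2))))) with hf
  have hderiv : ∀ z ∈ Ioi (0:ℝ), HasDerivAt f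
      ((1 - Real.exp (-(c * z ^ (-(α/2)))))
        - c * (α/2) * z ^ (-(α/2)) * Real.exp (-(c * z ^ (-(α/2))))) z := by
    intro z hz
    have hz0 : (0:ℝ) < z := hz
    have h1 : HasDerivAt (fun x : ℝ => x ^ (-(α/2))) (-(α/2) * z ^ (-(α/2) - 1)) z :=
      Real.hasDerivAt_rpow_const (Or.inl hz0.ne')
    have h2 : HasDerivAt (fun x : ℝ => 1 - Real.exp (-(c * x ^ (-(α/2)))))
        (-(Real.exp (-(c * z ^ (-(α/2)))) * -(c * (-(α/2) * z ^ (-(α/2) - 1))))) z :=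
      (((h1.const_mul c).neg).exp).const_sub 1
    have h3 := (hasDerivAt_id z).mul h2
    refine h3.congr_deriv (Eq.symm ?_)
    have e2 : z * z ^ (-(α/2) - 1) = z ^ (-(α/2)) := by
      nth_rewrite 1 [← Real.rpow_one z]
      rw [← Real.rpow_add hz0]; ring_nf
    simp only [id_eq, one_mul]
    linear_combination (c * (α/2) * Real.exp (-(c * z ^ (-(α/2))))) * e2
  have hcont : ContinuousWithinAt f (Ici (0:ℝ)) 0 := by
    have hf0 : f 0 = 0 := by simp [hf]
    rw [ContinuousWithinAt, hf0]
    apply squeeze_zero' (f := f) (g := fun z : ℝ => z)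
    · filter_upwards [eventually_mem_nhdsWithin] with z hz
      have hz0 : (0:ℝ) ≤ z := hz
      have hu : 0 ≤ c * z ^ (-(α/2)) := mul_nonneg hc.le (Real.rpow_nonneg hz0 _)
      exact mul_nonneg hz0 (apil_one_sub_exp_nonneg hu)
    · filter_upwards [eventually_mem_nhdsWithin] with z hz
      have hz0 : (0:ℝ) ≤ z := hz
      have hexp : 0 ≤ Real.exp (-(c * z ^ (-(α/2)))) := (Real.exp_pos _).le
      show z * (1 - Real.exp (-(c * z ^ (-(α/2))))) ≤ z
      nlinarith [mul_nonneg hz0 hexp]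
    · exact tendsto_id.mono_left nhdsWithin_le_nhds
  have htop : Tendsto f atTop (𝓝 0) := by
    apply squeeze_zero' (f := f) (g := fun z : ℝ => c * z ^ (-(α/2 - 1)))
    · filter_upwards [eventually_gt_atTop (0:ℝ)] with z hz0
      have hu : 0 ≤ c * z ^ (-(α/2)) := mul_nonneg hc.le (Real.rpow_nonneg hz0.le _)
      exact mul_nonneg hz0.le (apil_one_sub_exp_nonneg hu)
    · filter_upwards [eventually_gt_atTop (0:ℝ)] with z hz0
      have hu : 0 ≤ c * z ^ (-(α/2)) := mul_nonneg hc.le (Real.rpow_nonneg hz0.le _)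
      have hle : 1 - Real.exp (-(c * z ^ (-(α/2)))) ≤ c * z ^ (-(α/2)) :=
        apil_one_sub_exp_le hu
      have e3 : z * z ^ (-(α/2)) = z ^ (-(α/2 - 1)) := by
        nth_rewrite 1 [← Real.rpow_one z]
        rw [← Real.rpow_add hz0]; ring_nf
      calc f z ≤ z * (c * z ^ (-(α/2))) := by
                have := mul_le_mul_of_nonneg_left hle hz0.le
                simpa [hf] using this
        _ = c * z ^ (-(α/2 - 1)) := by rw [← e3]; ring
    · have := (tendsto_rpow_neg_atTop (by linarith : (0:ℝ) < α/2 - 1)).const_mul c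
      simpa using this
  have hint1 := apil_intOn_one_sub_exp hα hc.le
  have hint2 := apil_intOn_exp_part hα hc.le
  have hftc := integral_Ioi_of_hasDerivAt_of_tendsto hcont hderiv (hint1.sub hint2) htop
  have hf0 : f 0 = 0 := by simp [hf]
  rw [hf0, sub_zero] at hftc
  have hsub := integral_sub hint1 hint2
  rw [hftc] at hsub
  have := apil_aux_exp_int hα hc
  linarith [hsub, this]
set_option maxHeartbeats 2000000 in
/-- Theorem 2(i) exponent (Laplace transform of the complete 3D shot signal process,
APIL scenario): for `α > 2`, NLoS factor `ℓ ∈ [0,1]`, a measurable LoS probability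
`ρ : [0,π/2] → [0,1]`, and independent `W ≥ 0` (with `E[W^{2/α}] < ∞`) and
`Θ ∈ [0,π/2]`, for every `s > 0`,
`∫₀^∞ E[ρ(Θ)(1 - e^{-s W cos^α Θ z^{-α/2}}) + (1-ρ(Θ))(1 - e^{-s ℓ W cos^α Θ z^{-α/2}})] dz
  = s^{2/α} Γ(1 - 2/α) E[W^{2/α}] ω`, with `ω = E[cos² Θ (ρ(Θ)(1-ℓ^{2/α}) + ℓ^{2/α})]`. -/
theorem apil_laplace_exponent
    {Ω : Type*} [MeasurableSpace Ω] (μ : Measure Ω) [IsProbabilityMeasure μ]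
    (α ℓ : ℝ) (hα : 2 < α) (hℓ0 : 0 ≤ ℓ) (hℓ1 : ℓ ≤ 1)
    (ρ : ℝ → ℝ) (hρ : Measurable ρ) (hρ01 : ∀ θ ∈ Icc (0 : ℝ) (π / 2), ρ θ ∈ Icc (0 : ℝ) 1)
    (W Θ : Ω → ℝ) (hW : Measurable W) (hΘ : Measurable Θ)
    (hindep : ProbabilityTheory.IndepFun W Θ μ)
    (hW0 : ∀ ω, 0 ≤ W ω) (hΘrange : ∀ ω, Θ ω ∈ Icc (0 : ℝ) (π / 2))
    (hWint : Integrable (fun ω => W ω ^ (2 / α)) μ) :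
    ∀ s : ℝ, 0 < s →
      ∫ z in Ioi (0 : ℝ),
          (∫ ω, (ρ (Θ ω) *
              (1 - Real.exp (-(s * W ω * Real.cos (Θ ω) ^ α * z ^ (-(α / 2)))))
            + (1 - ρ (Θ ω)) *
              (1 - Real.exp (-(s * ℓ * W ω * Real.cos (Θ ω) ^ α * z ^ (-(α / 2)))))) ∂μ)
        = s ^ (2 / α) * Real.Gamma (1 - 2 / α) * (∫ ω, W ω ^ (2 / α) ∂μ) *
            ∫ ω, Real.cos (Θ ω) ^ 2 * (ρ (Θ ω) * (1 - ℓ ^ (2 / α)) + ℓ ^ (2 / α)) ∂μ := by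
  intro s hs
  have hα0 : (0:ℝ) < α := by linarith
  have ha0 : (0:ℝ) < 2/α := by positivity
  have hℓa0 : (0:ℝ) ≤ ℓ ^ (2/α) := Real.rpow_nonneg hℓ0 _
  have hℓa1 : ℓ ^ (2/α) ≤ 1 := Real.rpow_le_one hℓ0 hℓ1 ha0.le
  have hcos : ∀ ω0 : Ω, 0 ≤ Real.cos (Θ ω0) := by
    intro ω0
    refine Real.cos_nonneg_of_mem_Icc ⟨?_, (hΘrange ω0).2⟩
    have := (hΘrange ω0).1
    have hpi := Real.pi_pos
    linarith
  have hc₁0 : ∀ ω0 : Ω, 0 ≤ s * W ω0 * Real.cos (Θ ω0) ^ α := fun ω0 =>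
    mul_nonneg (mul_nonneg hs.le (hW0 ω0)) (Real.rpow_nonneg (hcos ω0) α)
  have hc₂0 : ∀ ω0 : Ω, 0 ≤ s * ℓ * W ω0 * Real.cos (Θ ω0) ^ α := fun ω0 =>
    mul_nonneg (mul_nonneg (mul_nonneg hs.le hℓ0) (hW0 ω0)) (Real.rpow_nonneg (hcos ω0) α)
  have hρmem : ∀ ω0 : Ω, ρ (Θ ω0) ∈ Icc (0:ℝ) 1 := fun ω0 => hρ01 _ (hΘrange ω0)
  -- pointwise value of the inner z-integral
  have hFval : ∀ ω0 : Ω, (∫ z in Ioi (0:ℝ),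
      (ρ (Θ ω0) * (1 - Real.exp (-(s * W ω0 * Real.cos (Θ ω0) ^ α * z ^ (-(α / 2)))))
        + (1 - ρ (Θ ω0)) *
          (1 - Real.exp (-(s * ℓ * W ω0 * Real.cos (Θ ω0) ^ α * z ^ (-(α / 2)))))))
      = (Real.Gamma (1 - 2/α) * s ^ (2/α)) *
          (W ω0 ^ (2/α) *
            (Real.cos (Θ ω0) ^ 2 * (ρ (Θ ω0) * (1 - ℓ ^ (2/α)) + ℓ ^ (2/α)))) := by
    intro ω0
    rw [integral_add ((apil_intOn_one_sub_exp hα (hc₁0 ω0)).const_mul _)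
      ((apil_intOn_one_sub_exp hα (hc₂0 ω0)).const_mul _),
      MeasureTheory.integral_const_mul, MeasureTheory.integral_const_mul,
      apil_key_integral hα (hc₁0 ω0), apil_key_integral hα (hc₂0 ω0)]
    have h2a : α * (2/α) = 2 := by field_simp
    have hc₁a : (s * W ω0 * Real.cos (Θ ω0) ^ α) ^ (2/α)
        = s ^ (2/α) * W ω0 ^ (2/α) * Real.cos (Θ ω0) ^ 2 := by
      rw [Real.mul_rpow (mul_nonneg hs.le (hW0 ω0)) (Real.rpow_nonneg (hcos ω0) α),
        Real.mul_rpow hs.le (hW0 ω0), ← Real.rpow_mul (hcos ω0), h2a,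
        show ((2:ℝ)) = ((2:ℕ):ℝ) from by norm_num, Real.rpow_natCast]
    have hc₂c₁ : s * ℓ * W ω0 * Real.cos (Θ ω0) ^ α
        = ℓ * (s * W ω0 * Real.cos (Θ ω0) ^ α) := by ring
    rw [hc₂c₁, Real.mul_rpow hℓ0 (hc₁0 ω0), hc₁a]
    ring
  -- nonnegativity of the integrand
  have hHnn : ∀ ω0 : Ω, ∀ z : ℝ, z ∈ Ioi (0:ℝ) →
      0 ≤ ρ (Θ ω0) * (1 - Real.exp (-(s * W ω0 * Real.cos (Θ ω0) ^ α * z ^ (-(α / 2)))))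
        + (1 - ρ (Θ ω0)) *
          (1 - Real.exp (-(s * ℓ * W ω0 * Real.cos (Θ ω0) ^ α * z ^ (-(α / 2))))) := by
    intro ω0 z hz
    have hz0 : (0:ℝ) < z := hz
    have h1 := apil_one_sub_exp_nonneg
      (mul_nonneg (hc₁0 ω0) (Real.rpow_nonneg hz0.le (-(α/2))))
    have h2 := apil_one_sub_exp_nonneg
      (mul_nonneg (hc₂0 ω0) (Real.rpow_nonneg hz0.le (-(α/2))))
    have := hρmem ω0
    have h3 : 0 ≤ ρ (Θ ω0) := this.1
    have h4 : ρ (Θ ω0) ≤ 1 := this.2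
    have e1 : s * W ω0 * Real.cos (Θ ω0) ^ α * z ^ (-(α/2))
        = s * W ω0 * Real.cos (Θ ω0) ^ α * z ^ (-(α/2)) := rfl
    nlinarith [mul_nonneg h3 h1, mul_nonneg (by linarith : (0:ℝ) ≤ 1 - ρ (Θ ω0)) h2]
  -- measurability of the kernel on the product space
  have hHm : AEStronglyMeasurable
      (Function.uncurry (fun (z : ℝ) (ω0 : Ω) =>
        ρ (Θ ω0) * (1 - Real.exp (-(s * W ω0 * Real.cos (Θ ω0) ^ α * z ^ (-(α / 2)))))
          + (1 - ρ (Θ ω0)) *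
            (1 - Real.exp (-(s * ℓ * W ω0 * Real.cos (Θ ω0) ^ α * z ^ (-(α / 2)))))))
      ((volume.restrict (Ioi (0:ℝ))).prod μ) := by
    apply Measurable.aestronglyMeasurable
    unfold Function.uncurry
    fun_prop
  -- integrability on the product space
  have hint : Integrable
      (Function.uncurry (fun (z : ℝ) (ω0 : Ω) =>
        ρ (Θ ω0) * (1 - Real.exp (-(s * W ω0 * Real.cos (Θ ω0) ^ α * z ^ (-(α / 2)))))
          + (1 - ρ (Θ ω0)) *
            (1 - Real.exp (-(s * ℓ * W ω0 * Real.cos (Θ ω0) ^ α * z ^ (-(α / 2)))))))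
      ((volume.restrict (Ioi (0:ℝ))).prod μ) := by
    rw [MeasureTheory.integrable_prod_iff' hHm]
    constructor
    · refine ae_of_all _ (fun ω0 => ?_)
      have h := ((apil_intOn_one_sub_exp hα (hc₁0 ω0)).const_mul (ρ (Θ ω0))).add
        ((apil_intOn_one_sub_exp hα (hc₂0 ω0)).const_mul (1 - ρ (Θ ω0)))
      exact h
    · have heq : ∀ ω0 : Ω, (∫ z in Ioi (0:ℝ),
          ‖ρ (Θ ω0) * (1 - Real.exp (-(s * W ω0 * Real.cos (Θ ω0) ^ α * z ^ (-(α / 2)))))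
            + (1 - ρ (Θ ω0)) *
              (1 - Real.exp (-(s * ℓ * W ω0 * Real.cos (Θ ω0) ^ α * z ^ (-(α / 2)))))‖)
          = (Real.Gamma (1 - 2/α) * s ^ (2/α)) *
              (W ω0 ^ (2/α) *
                (Real.cos (Θ ω0) ^ 2 *
                  (ρ (Θ ω0) * (1 - ℓ ^ (2/α)) + ℓ ^ (2/α)))) := by
        intro ω0
        rw [← hFval ω0]
        refine setIntegral_congr_fun measurableSet_Ioi (fun z hz => ?_)
        exact Real.norm_of_nonneg (hHnn ω0 z hz)
      refine (Integrable.congr ?_ (ae_of_all _ (fun ω0 => (heq ω0).symm)))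
      have hG01 : ∀ ω0 : Ω, 0 ≤ Real.cos (Θ ω0) ^ 2 *
            (ρ (Θ ω0) * (1 - ℓ ^ (2/α)) + ℓ ^ (2/α)) ∧
          Real.cos (Θ ω0) ^ 2 * (ρ (Θ ω0) * (1 - ℓ ^ (2/α)) + ℓ ^ (2/α)) ≤ 1 := by
        intro ω0
        have h3 := (hρmem ω0).1
        have h4 := (hρmem ω0).2
        have hc1 := Real.cos_le_one (Θ ω0)
        have hc2 := hcos ω0
        have hg0 : 0 ≤ ρ (Θ ω0) * (1 - ℓ ^ (2/α)) + ℓ ^ (2/α) := by nlinarith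
        have hg1 : ρ (Θ ω0) * (1 - ℓ ^ (2/α)) + ℓ ^ (2/α) ≤ 1 := by nlinarith
        have hcos2 : Real.cos (Θ ω0) ^ 2 ≤ 1 := by nlinarith
        constructor
        · positivity
        · have hcos20 : 0 ≤ Real.cos (Θ ω0) ^ 2 := by positivity
          nlinarith
      refine Integrable.mono'
        (hWint.const_mul (Real.Gamma (1 - 2/α) * s ^ (2/α))) ?_ ?_
      · apply Measurable.aestronglyMeasurable
        fun_prop
      · refine ae_of_all _ (fun ω0 => ?_)
        have hΓ : 0 ≤ Real.Gamma (1 - 2/α) := by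
          have : (0:ℝ) < 1 - 2/α := by
            have : 2/α < 1 := (div_lt_one hα0).mpr hα
            linarith
          exact (Real.Gamma_pos_of_pos this).le
        have hsa : 0 ≤ s ^ (2/α) := Real.rpow_nonneg hs.le _
        have hWa : 0 ≤ W ω0 ^ (2/α) := Real.rpow_nonneg (hW0 ω0) _
        have h1 := (hG01 ω0).1
        have h2 := (hG01 ω0).2
        rw [Real.norm_eq_abs, abs_of_nonneg (by positivity)]
        have hCpos : 0 ≤ Real.Gamma (1 - 2/α) * s ^ (2/α) := by positivity
        nlinarith [mul_le_of_le_one_right hWa h2]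
  -- swap the two integrals
  have hswap := MeasureTheory.integral_integral_swap hint
  rw [hswap]
  -- evaluate the inner integral
  rw [MeasureTheory.integral_congr_ae (ae_of_all _ hFval), MeasureTheory.integral_const_mul]
  -- independence
  have hφ : Measurable (fun x : ℝ => x ^ (2/α)) := by fun_prop
  have hψ : Measurable (fun θ : ℝ =>
      Real.cos θ ^ 2 * (ρ θ * (1 - ℓ ^ (2/α)) + ℓ ^ (2/α))) := by fun_prop
  have hXY : ProbabilityTheory.IndepFun (fun ω0 => W ω0 ^ (2/α))
      (fun ω0 => Real.cos (Θ ω0) ^ 2 *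
        (ρ (Θ ω0) * (1 - ℓ ^ (2/α)) + ℓ ^ (2/α))) μ := hindep.comp hφ hψ
  have hX0 : (0:Ω → ℝ) ≤ fun ω0 => W ω0 ^ (2/α) := fun ω0 =>
    Real.rpow_nonneg (hW0 ω0) _
  have hY0 : (0:Ω → ℝ) ≤ fun ω0 => Real.cos (Θ ω0) ^ 2 *
      (ρ (Θ ω0) * (1 - ℓ ^ (2/α)) + ℓ ^ (2/α)) := by
    intro ω0
    have h3 := (hρmem ω0).1
    have : 0 ≤ ρ (Θ ω0) * (1 - ℓ ^ (2/α)) + ℓ ^ (2/α) := by nlinarith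
    positivity
  have hmul := hXY.integral_mul_eq_mul_integral
    ((hφ.comp hW).aestronglyMeasurable) ((hψ.comp hΘ).aestronglyMeasurable)
  have hmul' : (∫ ω0, W ω0 ^ (2/α) * (Real.cos (Θ ω0) ^ 2 *
        (ρ (Θ ω0) * (1 - ℓ ^ (2/α)) + ℓ ^ (2/α))) ∂μ)
      = (∫ ω0, W ω0 ^ (2/α) ∂μ) * ∫ ω0, Real.cos (Θ ω0) ^ 2 *
        (ρ (Θ ω0) * (1 - ℓ ^ (2/α)) + ℓ ^ (2/α)) ∂μ := hmul
  rw [hmul']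
  ring
end

section
/- Let N ≥ 1 be an integer, let V be a nonnegative random variable, and define g(t) := E[exp(−V/t)] for t > 0. Then g is infinitely differentiable on (0, ∞), and for every β > 0, (1/(N−1)!) · (d^{N−1}/dt^{N−1})[ t^{N−1}·g(t) ] evaluated at t = 1/β equals E[ exp(−βV) · Σ_{k=0}^{N−1} (βV)^k / k! ]. -/
open MeasureTheory Set Real

noncomputable def Ecoef (n m k : ℕ) : ℝ :=
  (n.choose k : ℝ) * ∏ j ∈ Finset.range (n - k), ((m : ℝ) - (k : ℝ) - (j : ℝ))

noncomputable def Efun (m n : ℕ) (v t : ℝ) : ℝ :=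
  Real.exp (-(v / t)) *
    ∑ k ∈ Finset.range (n + 1), Ecoef n m k * v ^ k * t ^ ((m : ℤ) - (n : ℤ) - (k : ℤ))

lemma Ecoef_eq_zero {n k : ℕ} (m : ℕ) (h : n < k) : Ecoef n m k = 0 := by
  simp [Ecoef, Nat.choose_eq_zero_of_lt h]

lemma Ecoef_zero_left (n m : ℕ) : Ecoef (n + 1) m 0 = ((m : ℝ) - n) * Ecoef n m 0 := by
  simp only [Ecoef, Nat.choose_zero_right, Nat.cast_one, one_mul, Nat.sub_zero,
    Nat.cast_zero, sub_zero]
  rw [Finset.prod_range_succ]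
  ring

lemma Ecoef_rec (n m k : ℕ) :
    Ecoef (n + 1) m (k + 1)
      = ((m : ℝ) - (n : ℝ) - ((k : ℝ) + 1)) * Ecoef n m (k + 1) + Ecoef n m k := by
  rcases lt_trichotomy k n with h | rfl | h
  · -- main case k < n
    have hd1 : n + 1 - (k + 1) = (n - k - 1) + 1 := by omega
    have hd2 : n - k = (n - k - 1) + 1 := by omega
    have hd3 : n - (k + 1) = n - k - 1 := by omega
    set d := n - k - 1 with hdd
    have hdcast : (d : ℝ) = (n : ℝ) - (k : ℝ) - 1 := by
      rw [hdd, Nat.cast_sub (by omega : 1 ≤ n - k), Nat.cast_sub h.le]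
      norm_num
    have hP2 : ∏ j ∈ Finset.range (d + 1), ((m : ℝ) - (k : ℝ) - (j : ℝ))
        = (∏ j ∈ Finset.range d, ((m : ℝ) - ((k : ℝ) + 1) - (j : ℝ))) * ((m : ℝ) - k) := by
      rw [Finset.prod_range_succ']
      congr 1
      · exact Finset.prod_congr rfl fun j _ => by push_cast; ring
      · norm_num
    have hP1 : ∏ j ∈ Finset.range (d + 1), ((m : ℝ) - ((k : ℝ) + 1) - (j : ℝ))
        = (∏ j ∈ Finset.range d, ((m : ℝ) - ((k : ℝ) + 1) - (j : ℝ))) * ((m : ℝ) - n) := by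
      rw [Finset.prod_range_succ, hdcast]
      congr 1
      ring
    have hb : ((k : ℝ) + 1) * (n.choose (k + 1) : ℝ) = ((n : ℝ) - k) * (n.choose k : ℝ) := by
      have h0 := Nat.choose_succ_right_eq n k
      have hcast := congrArg (fun x : ℕ => (x : ℝ)) h0
      push_cast [Nat.cast_sub h.le] at hcast
      linarith
    have hc : ((n + 1).choose (k + 1) : ℝ) = (n.choose k : ℝ) + (n.choose (k + 1) : ℝ) := by
      rw [Nat.choose_succ_succ]; push_cast; ring
    simp only [Ecoef, hd1, hd2, hd3]
    push_cast
    rw [hP2, hP1, hc]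
    set P := ∏ j ∈ Finset.range d, ((m : ℝ) - ((k : ℝ) + 1) - (j : ℝ))
    linear_combination P * hb
  · -- k = n
    rw [Ecoef_eq_zero m (Nat.lt_succ_self k)]
    simp [Ecoef, Nat.sub_self]
  · rw [Ecoef_eq_zero m (by omega), Ecoef_eq_zero m (by omega), Ecoef_eq_zero m (by omega)]
    ring

-- basic exp-zpow derivative
lemma hasDerivAt_exp_zpow (v : ℝ) (e : ℤ) {t : ℝ} (ht : 0 < t) :
    HasDerivAt (fun y : ℝ => Real.exp (-(v / y)) * y ^ e)
      (Real.exp (-(v / t)) * (v * t ^ (e - 2) + (e : ℝ) * t ^ (e - 1))) t := by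
  have h1 : HasDerivAt (fun y : ℝ => -(v / y)) (v / t ^ 2) t := by
    simpa [div_eq_mul_inv] using ((hasDerivAt_inv ht.ne').const_mul v).fun_neg
  have h2 := h1.exp
  have h3 := hasDerivAt_zpow e t (Or.inl ht.ne')
  have h4 := h2.mul h3
  refine h4.congr_deriv ?_
  have ht2 : t ^ (2 : ℤ) = t ^ (2 : ℕ) := by
    rw [show (2:ℤ) = ((2:ℕ):ℤ) by norm_num, zpow_natCast]
  have h5 : t ^ (e - 2) = t ^ e / t ^ (2 : ℕ) := by rw [← ht2, zpow_sub₀ ht.ne']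
  have h6 : t ^ (e - 1) = t ^ e / t ^ (1 : ℕ) := by
    rw [show t ^ (1:ℕ) = t ^ (1:ℤ) by rw [zpow_one, pow_one], ← zpow_sub₀ ht.ne']
  rw [h5, h6]
  have h2ne : t ^ (2:ℕ) ≠ 0 := pow_ne_zero _ ht.ne'
  field_simp


lemma hasDerivAt_Efun (m n : ℕ) (v : ℝ) {t : ℝ} (ht : 0 < t) :
    HasDerivAt (Efun m n v) (Efun m (n + 1) v t) t := by
  classical
  set E : ℤ := (m : ℤ) - (n : ℤ) - 1 with hE
  -- rewrite Efun m n v as a sum of simple terms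
  have hfun : Efun m n v = fun y : ℝ =>
      ∑ k ∈ Finset.range (n + 1), (Ecoef n m k * v ^ k) *
        (Real.exp (-(v / y)) * y ^ ((m : ℤ) - (n : ℤ) - (k : ℤ))) := by
    funext y
    rw [Efun, Finset.mul_sum]
    exact Finset.sum_congr rfl fun k _ => by ring
  rw [hfun]
  have hterm : ∀ k ∈ Finset.range (n + 1),
      HasDerivAt (fun y : ℝ => (Ecoef n m k * v ^ k) *
          (Real.exp (-(v / y)) * y ^ ((m : ℤ) - (n : ℤ) - (k : ℤ))))
        ((Ecoef n m k * v ^ k) *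
          (Real.exp (-(v / t)) * (v * t ^ (E - (k + 1 : ℕ)) + ((m : ℝ) - n - k) * t ^ (E - k)))) t := by
    intro k _
    refine ((hasDerivAt_exp_zpow v ((m : ℤ) - (n : ℤ) - (k : ℤ)) ht).const_mul _).congr_deriv ?_
    have e1 : (m : ℤ) - (n : ℤ) - (k : ℤ) - 2 = E - (k + 1 : ℕ) := by push_cast; ring
    have e2 : (m : ℤ) - (n : ℤ) - (k : ℤ) - 1 = E - k := by push_cast; ring
    rw [e1, e2]
    push_cast
    ring
  have hD := HasDerivAt.fun_sum hterm
  refine hD.congr_deriv ?_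
  -- now the sum identity
  rw [Efun, Finset.mul_sum]
  have hexp : ∀ k : ℕ, (m : ℤ) - ((n : ℕ) + 1 : ℕ) - (k : ℤ) = E - k := by
    intro k; push_cast; ring
  calc
    ∑ k ∈ Finset.range (n + 1), (Ecoef n m k * v ^ k) *
        (Real.exp (-(v / t)) * (v * t ^ (E - (k + 1 : ℕ)) + ((m : ℝ) - n - k) * t ^ (E - k)))
      = (∑ k ∈ Finset.range (n + 1),
          Real.exp (-(v / t)) * (Ecoef n m k * v ^ (k + 1) * t ^ (E - (k + 1 : ℕ))))
        + ∑ k ∈ Finset.range (n + 1),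
            Real.exp (-(v / t)) * (((m : ℝ) - n - k) * Ecoef n m k * v ^ k * t ^ (E - k)) := by
        rw [← Finset.sum_add_distrib]
        exact Finset.sum_congr rfl fun k _ => by ring
    _ = ∑ k ∈ Finset.range (n + 1 + 1),
          Real.exp (-(v / t)) * (Ecoef (n + 1) m k * v ^ k * t ^ (E - k)) := by
        rw [Finset.sum_range_succ' (fun k => Real.exp (-(v / t)) *
              (Ecoef (n + 1) m k * v ^ k * t ^ (E - k))) (n + 1)]
        have hpeel : ∑ k ∈ Finset.range (n + 1),
            Real.exp (-(v / t)) * (((m : ℝ) - n - k) * Ecoef n m k * v ^ k * t ^ (E - k))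
            = (∑ j ∈ Finset.range n, Real.exp (-(v / t)) *
                (((m : ℝ) - n - (j + 1)) * Ecoef n m (j + 1) * v ^ (j + 1) * t ^ (E - (j + 1 : ℕ))))
              + Real.exp (-(v / t)) * (((m : ℝ) - n) * Ecoef n m 0 * t ^ (E - (0 : ℕ))) := by
          rw [Finset.sum_range_succ' (fun k => Real.exp (-(v / t)) *
                (((m : ℝ) - n - k) * Ecoef n m k * v ^ k * t ^ (E - k))) n]
          push_cast
          ring_nf
        rw [hpeel]
        have hshift : ∑ j ∈ Finset.range (n + 1),
            Real.exp (-(v / t)) * (Ecoef (n + 1) m (j + 1) * v ^ (j + 1) * t ^ (E - (j + 1 : ℕ)))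
            = ∑ j ∈ Finset.range (n + 1),
              (Real.exp (-(v / t)) * (Ecoef n m j * v ^ (j + 1) * t ^ (E - (j + 1 : ℕ)))
               + Real.exp (-(v / t)) * (((m : ℝ) - n - (j + 1)) * Ecoef n m (j + 1) * v ^ (j + 1)
                  * t ^ (E - (j + 1 : ℕ)))) := by
          refine Finset.sum_congr rfl fun j _ => ?_
          rw [Ecoef_rec n m j]
          push_cast
          ring
        rw [hshift, Finset.sum_add_distrib]
        have hlast : ∑ j ∈ Finset.range (n + 1),
            Real.exp (-(v / t)) * (((m : ℝ) - n - (j + 1)) * Ecoef n m (j + 1) * v ^ (j + 1)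
              * t ^ (E - (j + 1 : ℕ)))
            = ∑ j ∈ Finset.range n,
              Real.exp (-(v / t)) * (((m : ℝ) - n - (j + 1)) * Ecoef n m (j + 1) * v ^ (j + 1)
                * t ^ (E - (j + 1 : ℕ))) := by
          rw [Finset.sum_range_succ, Ecoef_eq_zero m (Nat.lt_succ_self n)]
          simp
        rw [hlast, Ecoef_zero_left]
        push_cast
        ring
    _ = ∑ k ∈ Finset.range (n + 1 + 1),
          Real.exp (-(v / t)) * (Ecoef (n + 1) m k * v ^ k * t ^ ((m : ℤ) - ((n : ℕ) + 1 : ℕ) - (k : ℤ))) := by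
        exact Finset.sum_congr rfl fun k _ => by rw [hexp k]

lemma Efun_abs_le (m n : ℕ) {v t : ℝ} (hv : 0 ≤ v) (ht : 0 < t) :
    |Efun m n v t| ≤
      (∑ k ∈ Finset.range (n + 1), |Ecoef n m k| * (k.factorial : ℝ)) * t ^ ((m : ℤ) - n) := by
  have hx : 0 ≤ v / t := div_nonneg hv ht.le
  have key : ∀ k : ℕ, Real.exp (-(v / t)) * (v / t) ^ k ≤ (k.factorial : ℝ) := by
    intro k
    have h1 : (v / t) ^ k / (k.factorial : ℝ) ≤ Real.exp (v / t) :=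
      Real.pow_div_factorial_le_exp _ hx k
    have hf : (0 : ℝ) < (k.factorial : ℝ) := by exact_mod_cast k.factorial_pos
    rw [div_le_iff₀ hf] at h1
    rw [Real.exp_neg]
    calc (Real.exp (v / t))⁻¹ * (v / t) ^ k
        ≤ (Real.exp (v / t))⁻¹ * (Real.exp (v / t) * (k.factorial : ℝ)) := by
          gcongr
      _ = (k.factorial : ℝ) := by
          rw [← mul_assoc, inv_mul_cancel₀ (Real.exp_pos _).ne', one_mul]
  have hterm : ∀ k : ℕ, v ^ k * t ^ ((m : ℤ) - n - k) = (v / t) ^ k * t ^ ((m : ℤ) - n) := by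
    intro k
    rw [zpow_sub₀ ht.ne', zpow_natCast, div_pow]
    have : t ^ k ≠ 0 := pow_ne_zero _ ht.ne'
    field_simp
  rw [Efun, abs_mul, abs_of_pos (Real.exp_pos _)]
  calc Real.exp (-(v / t)) *
        |∑ k ∈ Finset.range (n + 1), Ecoef n m k * v ^ k * t ^ ((m : ℤ) - n - k)|
      ≤ Real.exp (-(v / t)) *
        ∑ k ∈ Finset.range (n + 1), |Ecoef n m k * v ^ k * t ^ ((m : ℤ) - n - k)| := by
        gcongr
        exact Finset.abs_sum_le_sum_abs _ _
    _ = ∑ k ∈ Finset.range (n + 1),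
          |Ecoef n m k| * (Real.exp (-(v / t)) * (v / t) ^ k) * t ^ ((m : ℤ) - n) := by
        rw [Finset.mul_sum]
        refine Finset.sum_congr rfl fun k _ => ?_
        rw [abs_mul, abs_mul, abs_of_nonneg (pow_nonneg hv k),
          abs_of_pos (zpow_pos ht _), mul_assoc (|Ecoef n m k|), hterm k]
        ring
    _ ≤ ∑ k ∈ Finset.range (n + 1),
          |Ecoef n m k| * (k.factorial : ℝ) * t ^ ((m : ℤ) - n) := by
        refine Finset.sum_le_sum fun k _ => ?_
        have := key k
        have h0 : (0:ℝ) ≤ |Ecoef n m k| := abs_nonneg _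
        have h1 : (0:ℝ) ≤ t ^ ((m : ℤ) - n) := (zpow_pos ht _).le
        gcongr
    _ = (∑ k ∈ Finset.range (n + 1), |Ecoef n m k| * (k.factorial : ℝ)) * t ^ ((m : ℤ) - n) := by
        rw [Finset.sum_mul]

lemma Ecoef_diag (n k : ℕ) (hk : k ≤ n) :
    Ecoef n n k = (n.choose k : ℝ) * ((n - k).factorial : ℝ) := by
  rw [Ecoef]
  congr 1
  have hc : ∀ j ∈ Finset.range (n - k), ((n : ℝ) - k - j) = (((n - k - j : ℕ)) : ℝ) := by
    intro j hj
    have hj' := Finset.mem_range.mp hj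
    rw [Nat.cast_sub (by omega), Nat.cast_sub hk]
  rw [Finset.prod_congr rfl hc, ← Nat.cast_prod]
  congr 1
  have := Nat.descFactorial_eq_prod_range (n - k) (n - k)
  rw [← this, Nat.descFactorial_self]

lemma Efun_diag (n : ℕ) (v β : ℝ) (hβ : 0 < β) :
    ((n.factorial : ℝ))⁻¹ * Efun n n v (1 / β)
      = Real.exp (-(β * v)) * ∑ k ∈ Finset.range (n + 1), (β * v) ^ k / (k.factorial : ℝ) := by
  have hβ0 : β ≠ 0 := hβ.ne'
  have harg : v / (1 / β) = β * v := by field_simp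
  rw [Efun, harg, Finset.mul_sum, Finset.mul_sum, Finset.mul_sum]
  refine Finset.sum_congr rfl fun k hk => ?_
  have hkn : k ≤ n := by have := Finset.mem_range.mp hk; omega
  have hz : ((1 : ℝ) / β) ^ ((n : ℤ) - n - k) = β ^ k := by
    have h1 : (n : ℤ) - n - k = -(k : ℤ) := by ring
    rw [h1, one_div, inv_zpow, ← zpow_neg, neg_neg, zpow_natCast]
  rw [Ecoef_diag n k hkn, hz]
  have hfact := Nat.choose_mul_factorial_mul_factorial hkn
  have hcast := congrArg (fun x : ℕ => (x : ℝ)) hfact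
  push_cast at hcast
  have hkf : ((k.factorial : ℝ)) ≠ 0 := by exact_mod_cast k.factorial_pos.ne'
  have hnf : ((n.factorial : ℝ)) ≠ 0 := by exact_mod_cast n.factorial_pos.ne'
  have key : ((n.factorial : ℝ))⁻¹ * ((n.choose k : ℝ) * (((n - k).factorial : ℝ))) =
      ((k.factorial : ℝ))⁻¹ := by
    field_simp
    linear_combination hcast
  rw [div_eq_mul_inv, mul_pow]
  linear_combination (Real.exp (-(β * v)) * v ^ k * β ^ k) * key

lemma norm_cexp_le_one {v : ℝ} (hv : 0 ≤ v) {z : ℂ} (hz : 0 < z.re) :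
    ‖Complex.exp (-((v : ℂ) / z))‖ ≤ 1 := by
  rw [Complex.norm_exp, Real.exp_le_one_iff]
  have hre : ((v : ℂ) / z).re = v * z.re / Complex.normSq z := by
    rw [Complex.div_re]
    simp [Complex.ofReal_re, Complex.ofReal_im]
  rw [Complex.neg_re, hre]
  have : 0 ≤ v * z.re / Complex.normSq z :=
    div_nonneg (mul_nonneg hv hz.le) (Complex.normSq_nonneg z)
  linarith

lemma norm_cexp_deriv_le {v : ℝ} (hv : 0 ≤ v) {z : ℂ} (hz : 0 < z.re) :
    ‖Complex.exp (-((v : ℂ) / z)) * ((v : ℂ) / z ^ 2)‖ ≤ 1 / z.re := by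
  have hz0 : z ≠ 0 := fun h => by simp [h] at hz
  have hQ : 0 < Complex.normSq z := Complex.normSq_pos.mpr hz0
  have hre : ((v : ℂ) / z).re = v * z.re / Complex.normSq z := by
    rw [Complex.div_re]; simp [Complex.ofReal_re, Complex.ofReal_im]
  rw [norm_mul, Complex.norm_exp, Complex.neg_re, hre]
  have hnorm2 : ‖(v : ℂ) / z ^ 2‖ = v / Complex.normSq z := by
    rw [norm_div, norm_pow, Complex.normSq_eq_norm_sq]; simp [abs_of_nonneg hv]
  rw [hnorm2]
  set x : ℝ := v * z.re / Complex.normSq z with hx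
  have hx0 : 0 ≤ x := div_nonneg (mul_nonneg hv hz.le) hQ.le
  have hxe : Real.exp (-x) * x ≤ 1 := by
    rw [Real.exp_neg]
    have h1 : x ≤ Real.exp x := by linarith [Real.add_one_le_exp x]
    calc (Real.exp x)⁻¹ * x ≤ (Real.exp x)⁻¹ * Real.exp x := by gcongr
      _ = 1 := inv_mul_cancel₀ (Real.exp_pos x).ne'
  have hvq : v / Complex.normSq z = x / z.re := by
    rw [hx]; field_simp
  rw [hvq]
  calc Real.exp (-x) * (x / z.re) = (Real.exp (-x) * x) / z.re := by ring
    _ ≤ 1 / z.re := by gcongr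

lemma hasDerivAt_cexp_div (v : ℝ) {z : ℂ} (hz : z ≠ 0) :
    HasDerivAt (fun w : ℂ => Complex.exp (-((v : ℂ) / w)))
      (Complex.exp (-((v : ℂ) / z)) * ((v : ℂ) / z ^ 2)) z := by
  have h1 : HasDerivAt (fun w : ℂ => -((v : ℂ) / w)) ((v : ℂ) / z ^ 2) z := by
    have := ((hasDerivAt_inv hz).const_mul (v : ℂ)).fun_neg
    simpa [div_eq_mul_inv] using this
  exact h1.cexp

theorem contDiffOn_g_aux {Ω : Type*} [MeasurableSpace Ω] (μ : Measure Ω)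
    [IsProbabilityMeasure μ]
    (V : Ω → ℝ) (hV : Measurable V) (hV0 : ∀ ω, 0 ≤ V ω)
    (g : ℝ → ℝ) (hg : ∀ t : ℝ, 0 < t → g t = ∫ ω, Real.exp (-(V ω / t)) ∂μ) :
    ContDiffOn ℝ (⊤ : ℕ∞) g (Ioi (0 : ℝ)) := by
  set S : Set ℂ := {z : ℂ | 0 < z.re} with hS
  have hSopen : IsOpen S := isOpen_lt continuous_const Complex.continuous_re
  set G : ℂ → ℂ := fun z => ∫ ω, Complex.exp (-((V ω : ℂ) / z)) ∂μ with hG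
  have hmeas : ∀ z : ℂ, AEStronglyMeasurable (fun ω => Complex.exp (-((V ω : ℂ) / z))) μ := by
    intro z
    exact (Complex.measurable_exp.comp
      (((Complex.measurable_ofReal.comp hV).div_const z).neg)).aestronglyMeasurable
  have hdiff : ∀ z ∈ S, HasDerivAt G
      (∫ ω, Complex.exp (-((V ω : ℂ) / z)) * ((V ω : ℂ) / z ^ 2) ∂μ) z := by
    intro z hz
    have hzre : 0 < z.re := hz
    have hball : ∀ w ∈ Metric.ball z (z.re / 2), z.re / 2 < w.re := by
      intro w hw
      have h1 : |(w - z).re| ≤ ‖w - z‖ := Complex.abs_re_le_norm (w - z)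
      rw [Complex.sub_re] at h1
      have h2 : ‖w - z‖ < z.re / 2 := mem_ball_iff_norm.mp hw
      have := abs_lt.mp (lt_of_le_of_lt h1 h2)
      linarith [this.1]
    refine (hasDerivAt_integral_of_dominated_loc_of_deriv_le
      (F' := fun w ω => Complex.exp (-((V ω : ℂ) / w)) * ((V ω : ℂ) / w ^ 2))
      (bound := fun _ => 2 / z.re) (Metric.ball_mem_nhds z (half_pos hzre))
      (Filter.Eventually.of_forall fun w => hmeas w)
      ?_ ?_ ?_ ?_ ?_).2
    · -- integrable at z
      refine (integrable_const (1 : ℝ)).mono' (hmeas z) (ae_of_all _ fun ω => ?_)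
      exact norm_cexp_le_one (hV0 ω) hzre
    · exact ((Complex.measurable_exp.comp
        (((Complex.measurable_ofReal.comp hV).div_const z).neg)).mul
        ((Complex.measurable_ofReal.comp hV).div_const (z ^ 2))).aestronglyMeasurable
    · -- bound
      refine ae_of_all _ fun ω w hw => ?_
      have hwre : 0 < w.re := lt_trans (half_pos hzre) (hball w hw)
      calc ‖Complex.exp (-((V ω : ℂ) / w)) * ((V ω : ℂ) / w ^ 2)‖
          ≤ 1 / w.re := norm_cexp_deriv_le (hV0 ω) hwre
        _ ≤ 2 / z.re := by
            rw [div_le_div_iff₀ hwre hzre]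
            have := hball w hw
            linarith
    · exact integrable_const _
    · refine ae_of_all _ fun ω w hw => ?_
      have hwre : 0 < w.re := lt_trans (half_pos hzre) (hball w hw)
      have hw0 : w ≠ 0 := fun h => by simp [h] at hwre
      exact hasDerivAt_cexp_div (V ω) hw0
  have hGdiff : DifferentiableOn ℂ G S := fun z hz =>
    ((hdiff z hz).differentiableAt).differentiableWithinAt
  have hGan : AnalyticOnNhd ℂ G S := hGdiff.analyticOnNhd hSopen
  have hGanR : AnalyticOnNhd ℝ G S := hGan.restrictScalars
  have hofReal : AnalyticOnNhd ℝ (fun t : ℝ => (t : ℂ)) (Ioi (0 : ℝ)) := by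
    have := Complex.ofRealCLM.analyticOnNhd (Ioi (0 : ℝ))
    exact this
  have hmaps : MapsTo (fun t : ℝ => (t : ℂ)) (Ioi (0 : ℝ)) S := by
    intro t ht
    simpa [hS] using ht
  have hcomp : AnalyticOnNhd ℝ (fun t : ℝ => G (t : ℂ)) (Ioi (0 : ℝ)) :=
    hGanR.comp hofReal hmaps
  have hre : AnalyticOnNhd ℝ (fun t : ℝ => (G (t : ℂ)).re) (Ioi (0 : ℝ)) := by
    have := Complex.reCLM.comp_analyticOnNhd hcomp
    exact this
  have hcd : ContDiffOn ℝ (⊤ : ℕ∞) (fun t : ℝ => (G (t : ℂ)).re) (Ioi (0 : ℝ)) :=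
    hre.contDiffOn (isOpen_Ioi.uniqueDiffOn)
  refine hcd.congr fun t ht => ?_
  have ht' : (0 : ℝ) < t := ht
  have hGt : G (t : ℂ) = ((g t : ℝ) : ℂ) := by
    show (∫ ω, Complex.exp (-((V ω : ℂ) / (t : ℂ))) ∂μ) = ((g t : ℝ) : ℂ)
    rw [hg t ht']
    have h2 : ∫ ω, Complex.exp (-((V ω : ℂ) / (t : ℂ))) ∂μ
        = ∫ ω, ((Real.exp (-(V ω / t)) : ℝ) : ℂ) ∂μ := by
      refine integral_congr_ae (ae_of_all _ fun ω => ?_)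
      push_cast
      ring_nf
    rw [h2]
    have h3 := integral_ofReal (𝕜 := ℂ) (f := fun ω => Real.exp (-(V ω / t))) (μ := μ)
    exact h3
  rw [hGt, Complex.ofReal_re]


/-- Derivative representation of the Gamma-fading tail (Propositions 1 and 3):
for an integer `N ≥ 1`, a nonnegative random variable `V`, and
`g(t) = E[e^{-V/t}]` for `t > 0`, the function `g` is infinitely differentiable
on `(0,∞)` and for every `β > 0`,
`(1/(N-1)!) dᴺ⁻¹/dtᴺ⁻¹ [tᴺ⁻¹ g(t)] |_{t=1/β} = E[e^{-βV} Σ_{k=0}^{N-1} (βV)^k / k!]`. -/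
theorem gamma_fading_tail_derivative
    {Ω : Type*} [MeasurableSpace Ω] (μ : Measure Ω) [IsProbabilityMeasure μ]
    (N : ℕ) (hN : 1 ≤ N)
    (V : Ω → ℝ) (hV : Measurable V) (hV0 : ∀ ω, 0 ≤ V ω)
    (g : ℝ → ℝ) (hg : ∀ t : ℝ, 0 < t → g t = ∫ ω, Real.exp (-(V ω / t)) ∂μ) :
    ContDiffOn ℝ (⊤ : ℕ∞) g (Ioi (0 : ℝ)) ∧
    ∀ β : ℝ, 0 < β →
      ((N - 1).factorial : ℝ)⁻¹ *
          iteratedDeriv (N - 1) (fun t => t ^ (N - 1) * g t) (1 / β)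
        = ∫ ω, Real.exp (-(β * V ω)) *
            ∑ k ∈ Finset.range N, (β * V ω) ^ k / (k.factorial : ℝ) ∂μ := by
  refine ⟨contDiffOn_g_aux μ V hV hV0 g hg, ?_⟩
  set n := N - 1 with hn
  have hN1 : N = n + 1 := by omega
  set Φ : ℕ → ℝ → ℝ := fun j s => ∫ ω, Efun n j (V ω) s ∂μ with hΦ
  have hmeasE : ∀ (j : ℕ) (t : ℝ), Measurable (fun ω => Efun n j (V ω) t) := by
    intro j t
    have h1 : Continuous (fun v : ℝ => Real.exp (-(v / t))) :=
      Real.continuous_exp.comp ((continuous_id.div_const t).neg)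
    have h2 : Continuous (fun v : ℝ =>
        ∑ k ∈ Finset.range (j + 1), Ecoef j n k * v ^ k * t ^ ((n : ℤ) - j - k)) :=
      continuous_finset_sum _ fun k _ =>
        (continuous_const.mul (continuous_pow k)).mul continuous_const
    exact ((h1.mul h2).comp continuous_id).measurable.comp hV
  have hinteg : ∀ (j : ℕ) (t : ℝ), 0 < t → Integrable (fun ω => Efun n j (V ω) t) μ := by
    intro j t ht
    refine (integrable_const ((∑ k ∈ Finset.range (j + 1), |Ecoef j n k| * (k.factorial : ℝ))
        * t ^ ((n : ℤ) - j))).mono' ((hmeasE j t).aestronglyMeasurable)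
      (ae_of_all _ fun ω => ?_)
    rw [Real.norm_eq_abs]
    exact Efun_abs_le n j (hV0 ω) ht
  have hkey : ∀ (j : ℕ) (t : ℝ), 0 < t → HasDerivAt (Φ j) (Φ (j + 1) t) t := by
    intro j t ht
    set M := ∑ k ∈ Finset.range (j + 1 + 1), |Ecoef (j + 1) n k| * (k.factorial : ℝ) with hM
    have hM0 : 0 ≤ M :=
      Finset.sum_nonneg fun k _ => mul_nonneg (abs_nonneg _) (Nat.cast_nonneg _)
    have hball : ∀ s ∈ Metric.ball t (t / 2), t / 2 < s ∧ s < 2 * t := by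
      intro s hs
      have h1 : |s - t| < t / 2 := by
        rw [← Real.dist_eq]; exact hs
      have h2 := abs_lt.mp h1
      constructor <;> linarith [h2.1, h2.2]
    set K := M * ((2 * t) ^ n * (2 / t) ^ (j + 1)) with hK
    refine (hasDerivAt_integral_of_dominated_loc_of_deriv_le
      (F' := fun s ω => Efun n (j + 1) (V ω) s) (bound := fun _ => K) (Metric.ball_mem_nhds t (half_pos ht))
      (Filter.Eventually.of_forall fun s => (hmeasE j s).aestronglyMeasurable)
      (hinteg j t ht)
      ((hmeasE (j + 1) t).aestronglyMeasurable)
      (ae_of_all _ fun ω s hs => ?_)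
      (integrable_const K)
      (ae_of_all _ fun ω s hs => hasDerivAt_Efun n j (V ω)
        (lt_trans (half_pos ht) (hball s hs).1))).2
    have hs1 := (hball s hs).1
    have hs2 := (hball s hs).2
    have hs0 : 0 < s := lt_trans (half_pos ht) hs1
    rw [Real.norm_eq_abs]
    calc |Efun n (j + 1) (V ω) s|
        ≤ M * s ^ ((n : ℤ) - (j + 1)) := Efun_abs_le n (j + 1) (hV0 ω) hs0
      _ ≤ K := by
          rw [hK]
          have hzpow : s ^ ((n : ℤ) - (j + 1)) = s ^ n / s ^ (j + 1) := by
            rw [zpow_sub₀ hs0.ne', zpow_natCast,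
              show ((j : ℤ) + 1) = ((j + 1 : ℕ) : ℤ) by push_cast; ring, zpow_natCast]
          rw [hzpow]
          have hb : s ^ n / s ^ (j + 1) ≤ (2 * t) ^ n * (2 / t) ^ (j + 1) := by
            have hnum : s ^ n ≤ (2 * t) ^ n := pow_le_pow_left₀ hs0.le hs2.le n
            have hden : (t / 2) ^ (j + 1) ≤ s ^ (j + 1) :=
              pow_le_pow_left₀ (by positivity) hs1.le _
            have hd0 : (0 : ℝ) < (t / 2) ^ (j + 1) := by positivity
            calc s ^ n / s ^ (j + 1) ≤ (2 * t) ^ n / (t / 2) ^ (j + 1) :=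
                  div_le_div₀ (by positivity) hnum hd0 hden
              _ = (2 * t) ^ n * (2 / t) ^ (j + 1) := by
                  rw [div_eq_mul_inv, ← inv_pow, inv_div]
          exact mul_le_mul_of_nonneg_left hb hM0
  have hiter : ∀ (j : ℕ) (t : ℝ), 0 < t → iteratedDeriv j (Φ 0) t = Φ j t := by
    intro j
    induction j with
    | zero => intro t _; rw [iteratedDeriv_zero]
    | succ j ih =>
      intro t ht
      rw [iteratedDeriv_succ]
      have hev : iteratedDeriv j (Φ 0) =ᶠ[nhds t] Φ j := by
        filter_upwards [isOpen_Ioi.eventually_mem (show t ∈ Ioi (0:ℝ) from ht)] with s hs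
        exact ih s hs
      rw [hev.deriv_eq]
      exact (hkey j t ht).deriv
  intro β hβ
  have ht0 : (0 : ℝ) < 1 / β := by positivity
  have hEfun0 : ∀ (v s : ℝ), Efun n 0 v s = Real.exp (-(v / s)) * s ^ n := by
    intro v s
    rw [Efun, Finset.sum_range_one]
    have : ((n : ℤ) - (0 : ℕ) - (0 : ℕ)) = (n : ℤ) := by push_cast; ring
    rw [this]
    simp [Ecoef, zpow_natCast]
  have heq1 : (fun t : ℝ => t ^ (N - 1) * g t) =ᶠ[nhds (1 / β)] Φ 0 := by
    filter_upwards [isOpen_Ioi.eventually_mem (show (1 / β) ∈ Ioi (0:ℝ) from ht0)] with s hs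
    have hs0 : (0 : ℝ) < s := hs
    show s ^ (N - 1) * g s = ∫ ω, Efun n 0 (V ω) s ∂μ
    rw [hg s hs0, ← integral_const_mul]
    refine integral_congr_ae (ae_of_all _ fun ω => ?_)
    show s ^ (N - 1) * Real.exp (-(V ω / s)) = Efun n 0 (V ω) s
    rw [hEfun0]
    ring
  have h2 : iteratedDeriv (N - 1) (fun t : ℝ => t ^ (N - 1) * g t) (1 / β) = Φ n (1 / β) := by
    rw [heq1.iteratedDeriv_eq]
    exact hiter n (1 / β) ht0
  rw [h2, hΦ, ← integral_const_mul]
  refine integral_congr_ae (ae_of_all _ fun ω => ?_)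
  show ((N - 1).factorial : ℝ)⁻¹ * Efun n n (V ω) (1 / β)
      = Real.exp (-(β * V ω)) * ∑ k ∈ Finset.range N, (β * V ω) ^ k / (k.factorial : ℝ)
  rw [hN1]
  exact Efun_diag n (V ω) β hβ
end
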